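/- Pruning safety: let Ê_{h,·} be confidence rectangles containing the true mean vectors μ_h for all h, and V a nonnegative linear objective. Suppose h is pruned either because Ê_{h,·} ∩ W = ∅, or because there exists h' with Ê_{h',·} ⊆ W and inf_{u∈Ê_{h,·}} V(u) > sup_{u∈Ê_{h',·}} V(u). Then h is not an optimal constrained codec: either μ_h ∉ W, or V(μ_h) > V(μ_{h'}) for some h' with μ_{h'} ∈ W. Hence pruning never removes any minimizer of V(μ_h) over {h : μ_h ∈ W}. -/
import Mathlib


/-- Pruning safety: a codec pruned by PSP is provably infeasible or provably suboptimal,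
hence pruning never removes a minimizer of the constrained objective. -/
theorem stmt18 {ι C : Type*} [Fintype C] (H : Finset ι)
    (μ : ι → C → ℝ) (Ehat : ι → Set (C → ℝ)) (W : Set (C → ℝ))
    (w : C → ℝ) (hw : ∀ c, 0 ≤ w c)
    (V : (C → ℝ) → ℝ) (hV : ∀ u, V u = ∑ c, w c * u c)
    (hbox : ∀ h ∈ H, Ehat h ⊆ {u : C → ℝ | ∀ c, u c ∈ Set.Icc (0 : ℝ) 1})
    (hvalid : ∀ h ∈ H, μ h ∈ Ehat h)
    (h : ι) (hh : h ∈ H)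
    (hpruned : Ehat h ∩ W = ∅ ∨
      ∃ h' ∈ H, Ehat h' ⊆ W ∧ sSup (V '' Ehat h') < sInf (V '' Ehat h)) :
    (μ h ∉ W ∨ ∃ h' ∈ H, μ h' ∈ W ∧ V (μ h') < V (μ h)) ∧
      ¬(μ h ∈ W ∧ ∀ h' ∈ H, μ h' ∈ W → V (μ h) ≤ V (μ h')) := by
  have hVlb : ∀ g ∈ H, ∀ u ∈ Ehat g, (0 : ℝ) ≤ V u := by
    intro g hg u hu
    rw [hV]
    exact Finset.sum_nonneg fun c _ => mul_nonneg (hw c) ((hbox g hg hu c).1)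
  have hVub : ∀ g ∈ H, ∀ u ∈ Ehat g, V u ≤ ∑ c, w c := by
    intro g hg u hu
    rw [hV]
    refine Finset.sum_le_sum fun c _ => ?_
    have := hbox g hg hu c
    calc w c * u c ≤ w c * 1 := mul_le_mul_of_nonneg_left this.2 (hw c)
      _ = w c := mul_one _
  rcases hpruned with hdisj | ⟨h', hh', hsub, hlt⟩
  · have hnW : μ h ∉ W := by
      intro hW
      exact absurd (Set.mem_inter (hvalid h hh) hW) (by simp [hdisj])
    exact ⟨Or.inl hnW, fun ⟨hW, _⟩ => hnW hW⟩
  · have h1 : V (μ h') ≤ sSup (V '' Ehat h') :=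
      le_csSup ⟨∑ c, w c, by rintro _ ⟨u, hu, rfl⟩; exact hVub h' hh' u hu⟩
        ⟨μ h', hvalid h' hh', rfl⟩
    have h2 : sInf (V '' Ehat h) ≤ V (μ h) :=
      csInf_le ⟨0, by rintro _ ⟨u, hu, rfl⟩; exact hVlb h hh u hu⟩
        ⟨μ h, hvalid h hh, rfl⟩
    have hVlt : V (μ h') < V (μ h) := lt_of_le_of_lt h1 (lt_of_lt_of_le hlt h2)
    have hW' : μ h' ∈ W := hsub (hvalid h' hh')
    exact ⟨Or.inr ⟨h', hh', hW', hVlt⟩,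
      fun ⟨_, hmin⟩ => absurd (hmin h' hh' hW') (not_le.2 hVlt)⟩
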